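/- Let f : ℝⁿ → ℝⁿ be analytic with f(ζ) = 0 and Df(ζ) invertible, and let ν = ‖z - ζ‖·γ(f,ζ) < 1 - √2/2. Then Df(z) is invertible and the Newton iterate N_f(z) = z - Df(z)⁻¹f(z) satisfies ‖N_f(z) - ζ‖ ≤ ν‖z - ζ‖/ψ(ν), where ψ(ν) = 1 - 4ν + 2ν². -/

import Mathlib

noncomputable section

open Metric Filter

/-- The inverse of the derivative of `f` at `x` (zero if not invertible). -/
def dfInv {n : ℕ} (f : EuclideanSpace ℝ (Fin n) → EuclideanSpace ℝ (Fin n))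
    (x : EuclideanSpace ℝ (Fin n)) :
    EuclideanSpace ℝ (Fin n) →L[ℝ] EuclideanSpace ℝ (Fin n) :=
  Ring.inverse (fderiv ℝ f x)

/-- The term `‖Df(x)⁻¹ D^k f(x) / k!‖^(1/(k-1))` of Smale's gamma invariant. -/
def smaleTerm {n : ℕ} (f : EuclideanSpace ℝ (Fin n) → EuclideanSpace ℝ (Fin n))
    (x : EuclideanSpace ℝ (Fin n)) (k : ℕ) : ℝ :=
  (‖(dfInv f x).compContinuousMultilinearMap (iteratedFDeriv ℝ k f x)‖ /
      (Nat.factorial k : ℝ)) ^ ((1 : ℝ) / ((k : ℝ) - 1))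

/-- Smale's gamma invariant `γ(f,x) = sup_{k ≥ 2} ‖Df(x)⁻¹ D^k f(x)/k!‖^(1/(k-1))`. -/
def smaleGamma {n : ℕ} (f : EuclideanSpace ℝ (Fin n) → EuclideanSpace ℝ (Fin n))
    (x : EuclideanSpace ℝ (Fin n)) : ℝ :=
  ⨆ k : ℕ, smaleTerm f x (k + 2)

/-- Smale's beta invariant `β(f,x) = ‖Df(x)⁻¹ f(x)‖`, the Newton step length. -/
def smaleBeta {n : ℕ} (f : EuclideanSpace ℝ (Fin n) → EuclideanSpace ℝ (Fin n))
    (x : EuclideanSpace ℝ (Fin n)) : ℝ :=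
  ‖dfInv f x (f x)‖

/-- The Newton operator `N_f(x) = x - Df(x)⁻¹ f(x)`. -/
def newton {n : ℕ} (f : EuclideanSpace ℝ (Fin n) → EuclideanSpace ℝ (Fin n))
    (x : EuclideanSpace ℝ (Fin n)) : EuclideanSpace ℝ (Fin n) :=
  x - dfInv f x (f x)

/-- `ψ(u) = 1 - 4u + 2u²`. -/
def psi (u : ℝ) : ℝ := 1 - 4 * u + 2 * u ^ 2

/-! Normalise by `A = Df(ζ)⁻¹`: the map `g = A ∘ f` has `g(ζ) = 0`, `Dg(ζ) = 1`, and its `k`-th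
Taylor coefficient at `ζ` has norm at most `γ^(k-1)` for `k ≥ 2`. Hence the Taylor series of `g`
converges on the ball of radius `1/γ`, and represents `g` there by the identity theorem. With
`y = z - ζ` and `u = ‖y‖γ`, termwise estimates give `‖Dg(z) - 1‖ ≤ 1/(1-u)² - 1` and
`‖Dg(z)y - g(z)‖ ≤ u‖y‖/(1-u)²`. The first bound is `< 1` exactly when `ψ(u) > 0`, so a Neumann
series inverts `Dg(z)` with `‖Dg(z)⁻¹‖ ≤ (1-u)²/ψ(u)`, and `N_f(z) - ζ = Dg(z)⁻¹(Dg(z)y - g(z))`. -/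

open scoped Nat ENNReal

namespace FormalMultilinearSeries

variable {𝕜 E F : Type*} [NontriviallyNormedField 𝕜] [NormedAddCommGroup E] [NormedSpace 𝕜 E]
  [NormedAddCommGroup F] [NormedSpace 𝕜 F]

theorem norm_derivSeries_le (q : FormalMultilinearSeries 𝕜 E F) (m : ℕ) :
    ‖q.derivSeries m‖ ≤ (m + 1) * ‖q (m + 1)‖ := by
  have hcard : Fintype.card {s : Finset (Fin (1 + m)) // s.card = m} = m + 1 := by
    rw [Fintype.card_subtype, ← Finset.powerset_univ, ← Finset.powersetCard_eq_filter,
      Finset.card_powersetCard, Finset.card_univ, Fintype.card_fin, add_comm,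
      Nat.choose_succ_self_right]
  calc ‖q.derivSeries m‖ ≤ ‖q.changeOriginSeries 1 m‖ :=
        (ContinuousLinearMap.norm_compContinuousMultilinearMap_le _ _).trans
          (mul_le_of_le_one_left (norm_nonneg _)
            (ContinuousLinearMap.opNorm_le_bound _ zero_le_one (by simp)))
    _ ≤ ∑ _s : {s : Finset (Fin (1 + m)) // s.card = m}, ‖q (1 + m)‖ :=
        (norm_sum_le Finset.univ fun s : {s : Finset (Fin (1 + m)) // s.card = m} =>
          q.changeOriginSeriesTerm 1 m s.1 s.2).trans_eq
          (Finset.sum_congr rfl fun s _ => q.norm_changeOriginSeriesTerm 1 m s.1 s.2)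
    _ = (m + 1) * ‖q (m + 1)‖ := by
        rw [Finset.sum_const, Finset.card_univ, hcard, nsmul_eq_mul, add_comm 1 m]; push_cast; rfl

variable {q : FormalMultilinearSeries 𝕜 E F} {γ : ℝ}

theorem nonneg_of_norm_le_pow (hq : ∀ k, ‖q (k + 2)‖ ≤ γ ^ (k + 1)) : 0 ≤ γ := by
  simpa using (norm_nonneg _).trans (hq 0)

theorem inv_ofReal_le_radius (hq : ∀ k, ‖q (k + 2)‖ ≤ γ ^ (k + 1)) :
    (ENNReal.ofReal γ)⁻¹ ≤ q.radius := by
  have hγ := nonneg_of_norm_le_pow hq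
  refine ENNReal.le_of_forall_nnreal_lt fun r hr => ?_
  have hrγ : (r : ℝ) * γ ≤ 1 := by
    have := ENNReal.le_inv_iff_mul_le.1 hr.le
    rwa [← ENNReal.ofReal_coe_nnreal, ← ENNReal.ofReal_mul (NNReal.coe_nonneg r),
      ENNReal.ofReal_le_one] at this
  refine q.le_radius_of_bound (max (max ‖q 0‖ (‖q 1‖ * r)) r) fun k => ?_
  match k with
  | 0 => simp
  | 1 => simp
  | k + 2 =>
    calc ‖q (k + 2)‖ * r ^ (k + 2) ≤ γ ^ (k + 1) * r ^ (k + 2) := by gcongr; exact hq k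
      _ = (r * γ) ^ (k + 1) * r := by ring
      _ ≤ r := mul_le_of_le_one_left r.2 (pow_le_one₀ (by positivity) hrγ)
      _ ≤ _ := le_max_right _ _

theorem ofReal_lt_radius (hq : ∀ k, ‖q (k + 2)‖ ≤ γ ^ (k + 1)) {r : ℝ} (hr0 : 0 ≤ r)
    (hr : r * γ < 1) : ENNReal.ofReal r < q.radius := by
  refine lt_of_lt_of_le ?_ (inv_ofReal_le_radius hq)
  rw [← one_div, ENNReal.lt_div_iff_mul_lt (Or.inr ENNReal.ofReal_ne_top)
    (Or.inl ENNReal.ofReal_ne_top), ← ENNReal.ofReal_mul hr0]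
  exact ENNReal.ofReal_lt_one.2 hr

theorem norm_apply_diag_le (hq : ∀ k, ‖q (k + 2)‖ ≤ γ ^ (k + 1)) (k : ℕ) (y : E) :
    ‖q (k + 2) fun _ => y‖ ≤ (‖y‖ * γ) ^ (k + 1) * ‖y‖ :=
  calc ‖q (k + 2) fun _ => y‖ ≤ ‖q (k + 2)‖ * ∏ _i : Fin (k + 2), ‖y‖ := (q (k + 2)).le_opNorm _
    _ ≤ γ ^ (k + 1) * ‖y‖ ^ (k + 2) := by
        rw [Finset.prod_const, Finset.card_univ, Fintype.card_fin]; gcongr; exact hq k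
    _ = (‖y‖ * γ) ^ (k + 1) * ‖y‖ := by ring

theorem norm_derivSeries_apply_diag_le (hq : ∀ k, ‖q (k + 2)‖ ≤ γ ^ (k + 1)) (k : ℕ) (y : E) :
    ‖q.derivSeries (k + 1) fun _ => y‖ ≤ (k + 2) * (‖y‖ * γ) ^ (k + 1) :=
  calc ‖q.derivSeries (k + 1) fun _ => y‖
      ≤ ‖q.derivSeries (k + 1)‖ * ∏ _i : Fin (k + 1), ‖y‖ := (q.derivSeries (k + 1)).le_opNorm _
    _ ≤ ((k + 1 : ℕ) + 1) * ‖q (k + 2)‖ * ‖y‖ ^ (k + 1) := by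
        rw [Finset.prod_const, Finset.card_univ, Fintype.card_fin]; gcongr
        exact norm_derivSeries_le q (k + 1)
    _ = (k + 2) * ‖q (k + 2)‖ * ‖y‖ ^ (k + 1) := by push_cast; ring
    _ ≤ (k + 2) * γ ^ (k + 1) * ‖y‖ ^ (k + 1) := by gcongr; exact hq k
    _ = (k + 2) * (‖y‖ * γ) ^ (k + 1) := by ring

end FormalMultilinearSeries

theorem hasSum_add_two_mul_pow_succ {u : ℝ} (hu : ‖u‖ < 1) :
    HasSum (fun m : ℕ => ((m : ℝ) + 2) * u ^ (m + 1)) (1 / (1 - u) ^ 2 - 1) := by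
  have h := (hasSum_nat_add_iff' (f := fun n : ℕ => (((n + 1).choose 1 : ℕ) : ℝ) * u ^ n) 1).2
    (hasSum_choose_mul_geometric_of_norm_lt_one 1 hu)
  norm_num [Nat.choose_one_right, add_assoc] at h
  rwa [one_div]

namespace HasFPowerSeriesOnBall

open FormalMultilinearSeries

variable {𝕜 E F : Type*} [NontriviallyNormedField 𝕜] [NormedAddCommGroup E] [NormedSpace 𝕜 E]
  [NormedAddCommGroup F] [NormedSpace 𝕜 F] [CompleteSpace F] {q : FormalMultilinearSeries 𝕜 E F}
  {γ : ℝ} {g : E → F} {x y : E} {r : ℝ≥0∞}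

theorem norm_fderiv_sub_fderiv_le (hg : HasFPowerSeriesOnBall g q x r)
    (hq : ∀ k, ‖q (k + 2)‖ ≤ γ ^ (k + 1)) (hy : y ∈ eball 0 r) (hu : ‖y‖ * γ < 1) :
    ‖fderiv 𝕜 g (x + y) - fderiv 𝕜 g x‖ ≤ 1 / (1 - ‖y‖ * γ) ^ 2 - 1 := by
  have hu' : ‖‖y‖ * γ‖ < 1 := by
    rwa [Real.norm_of_nonneg (mul_nonneg (norm_nonneg y) (nonneg_of_norm_le_pow hq))]
  have hsum : HasSum (fun m => q.derivSeries (m + 1) fun _ => y)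
      (fderiv 𝕜 g (x + y) - fderiv 𝕜 g x) := by
    simpa [hg.fderiv.coeff_zero] using (hasSum_nat_add_iff' 1).2 (hg.fderiv.hasSum hy)
  exact hsum.norm_le_of_bounded (hasSum_add_two_mul_pow_succ hu')
    (norm_derivSeries_apply_diag_le hq · y)

theorem norm_fderiv_apply_sub_le (hg : HasFPowerSeriesOnBall g q x r)
    (hq : ∀ k, ‖q (k + 2)‖ ≤ γ ^ (k + 1)) (hy : y ∈ eball 0 r) (hu : ‖y‖ * γ < 1) :
    ‖fderiv 𝕜 g (x + y) y - (g (x + y) - g x)‖ ≤ ‖y‖ * γ / (1 - ‖y‖ * γ) ^ 2 * ‖y‖ := by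
  have hu' : ‖‖y‖ * γ‖ < 1 := by
    rwa [Real.norm_of_nonneg (mul_nonneg (norm_nonneg y) (nonneg_of_norm_le_pow hq))]
  have hD : HasSum (fun m => (m + 1) • q (m + 1) fun _ => y) (fderiv 𝕜 g (x + y) y) := by
    simpa [derivSeries_apply_diag] using
      (hg.fderiv.hasSum hy).mapL (ContinuousLinearMap.apply 𝕜 F y)
  have hG : HasSum (fun m => q (m + 1) fun _ => y) (g (x + y) - g x) := by
    simpa [hg.coeff_zero] using (hasSum_nat_add_iff' 1).2 (hg.hasSum hy)
  have hsum : HasSum (fun m => m • q (m + 1) fun _ => y)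
      (fderiv 𝕜 g (x + y) y - (g (x + y) - g x)) := by
    convert hD.sub hG using 2 with m
    rw [succ_nsmul, add_sub_cancel_right]
  refine hsum.norm_le_of_bounded ((hasSum_coe_mul_geometric_of_norm_lt_one hu').mul_right ‖y‖)
    fun m => ?_
  match m with
  | 0 => simp
  | k + 1 =>
    calc ‖(k + 1) • q (k + 2) fun _ => y‖ ≤ (k + 1 : ℕ) * ‖q (k + 2) fun _ => y‖ :=
          norm_nsmul_le ..
      _ ≤ (k + 1 : ℕ) * ((‖y‖ * γ) ^ (k + 1) * ‖y‖) := by gcongr; exact norm_apply_diag_le hq k y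
      _ = (k + 1 : ℕ) * (‖y‖ * γ) ^ (k + 1) * ‖y‖ := by ring

end HasFPowerSeriesOnBall

theorem isUnit_of_norm_sub_one_lt_one {R : Type*} [NormedRing R] [HasSummableGeomSeries R] {x : R}
    (hx : ‖x - 1‖ < 1) : IsUnit x := by
  simpa using isUnit_one_sub_of_norm_lt_one (x := 1 - x) (by rwa [norm_sub_rev])

namespace ContinuousLinearMap

variable {𝕜 E : Type*} [NontriviallyNormedField 𝕜] [NormedAddCommGroup E] [NormedSpace 𝕜 E]
  [CompleteSpace E] {T : E →L[𝕜] E} {c : ℝ}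

theorem norm_inverse_le_of_norm_sub_one_le (hT : ‖T - 1‖ ≤ c) (hc : c < 1) :
    ‖Ring.inverse T‖ ≤ (1 - c)⁻¹ := by
  have hT' : ‖1 - T‖ < 1 := by rw [norm_sub_rev]; linarith
  calc ‖Ring.inverse T‖ = ‖∑' k, (1 - T) ^ k‖ := by
        rw [geom_series_eq_inverse _ hT', sub_sub_cancel]
    _ ≤ ‖(1 : E →L[𝕜] E)‖ - 1 + (1 - ‖1 - T‖)⁻¹ := tsum_geometric_le_of_norm_lt_one _ hT'
    _ ≤ (1 - c)⁻¹ := by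
        have h1 : ‖(1 : E →L[𝕜] E)‖ ≤ 1 := norm_id_le
        have h2 : (1 - ‖1 - T‖)⁻¹ ≤ (1 - c)⁻¹ := by
          gcongr
          rwa [norm_sub_rev]
        linarith

theorem norm_sub_inverse_apply_le (hT : ‖T - 1‖ ≤ c) (hc : c < 1) (y w : E) :
    ‖y - Ring.inverse T w‖ ≤ ‖T y - w‖ / (1 - c) := by
  have hunit : IsUnit T := isUnit_of_norm_sub_one_lt_one (hT.trans_lt hc)
  calc ‖y - Ring.inverse T w‖ = ‖Ring.inverse T (T y - w)‖ := by
        rw [map_sub, show Ring.inverse T (T y) = y from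
          DFunLike.congr_fun (Ring.inverse_mul_cancel _ hunit) y]
    _ ≤ ‖Ring.inverse T‖ * ‖T y - w‖ := le_opNorm _ _
    _ ≤ (1 - c)⁻¹ * ‖T y - w‖ := by gcongr; exact norm_inverse_le_of_norm_sub_one_le hT hc
    _ = ‖T y - w‖ / (1 - c) := by rw [inv_mul_eq_div]

end ContinuousLinearMap

section TaylorSeries

variable {E F : Type*} [NormedAddCommGroup E] [NormedSpace ℝ E] [NormedAddCommGroup F]
  [NormedSpace ℝ F]

def taylorSeries (g : E → F) (x : E) : FormalMultilinearSeries ℝ E F :=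
  fun k => (k ! : ℝ)⁻¹ • iteratedFDeriv ℝ k g x

theorem hasFPowerSeriesOnBall_taylorSeries [CompleteSpace F] {g : E → F} {x : E}
    (hg : AnalyticOnNhd ℝ g (eball x (taylorSeries g x).radius))
    (hr : 0 < (taylorSeries g x).radius) :
    HasFPowerSeriesOnBall g (taylorSeries g x) x (taylorSeries g x).radius := by
  set q := taylorSeries g x
  have hG : HasFPowerSeriesOnBall (fun w => q.sum (w - x)) q x q.radius := by
    simpa using (q.hasFPowerSeriesOnBall hr).comp_sub x
  refine hG.congr (hG.analyticOnNhd.eqOn_of_preconnected_of_eventuallyEq hg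
    (convex_eball x _).isPreconnected (mem_eball_self hr) ?_)
  obtain ⟨p, ρ, hp⟩ := hg x (mem_eball_self hr)
  filter_upwards [eball_mem_nhds x hp.r_pos] with w hw
  have hsum := hp.hasSum_iteratedFDeriv (y := w - x) (by simpa [edist_eq_enorm_sub] using hw)
  rw [add_sub_cancel] at hsum
  exact hsum.tsum_eq

end TaylorSeries

theorem psi_pos {u : ℝ} (hu : u < 1 - Real.sqrt 2 / 2) : 0 < psi u := by
  have h2 : Real.sqrt 2 ^ 2 = 2 := Real.sq_sqrt zero_le_two
  unfold psi
  nlinarith [Real.sqrt_nonneg 2]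

theorem one_sub_inv_sq_sub_one {u : ℝ} (hu : u ≠ 1) :
    1 - (1 / (1 - u) ^ 2 - 1) = psi u / (1 - u) ^ 2 := by
  have : 1 - u ≠ 0 := sub_ne_zero.2 hu.symm
  field_simp
  unfold psi
  ring

theorem inv_sq_sub_one_lt_one {u : ℝ} (hu : u < 1 - Real.sqrt 2 / 2) :
    1 / (1 - u) ^ 2 - 1 < 1 := by
  have hu1 : u < 1 := by linarith [Real.sqrt_pos.2 two_pos]
  have := div_pos (psi_pos hu) (pow_pos (sub_pos.2 hu1) 2)
  linarith [one_sub_inv_sq_sub_one hu1.ne]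

section Smale

variable {n : ℕ} {f : EuclideanSpace ℝ (Fin n) → EuclideanSpace ℝ (Fin n)}
  {ζ : EuclideanSpace ℝ (Fin n)}

theorem smaleTerm_eq (hf : AnalyticAt ℝ f ζ) (k : ℕ) :
    smaleTerm f ζ k =
      ‖taylorSeries (fun w => dfInv f ζ (f w)) ζ k‖ ^ ((1 : ℝ) / ((k : ℝ) - 1)) := by
  have hcomp : iteratedFDeriv ℝ k (fun w => dfInv f ζ (f w)) ζ =
      (dfInv f ζ).compContinuousMultilinearMap (iteratedFDeriv ℝ k f ζ) :=
    (dfInv f ζ).iteratedFDeriv_comp_left hf.contDiffAt le_top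
  rw [smaleTerm, taylorSeries, hcomp, norm_smul, norm_inv, Real.norm_natCast, inv_mul_eq_div]

theorem smaleGamma_nonneg : 0 ≤ smaleGamma f ζ :=
  Real.iSup_nonneg fun _ => Real.rpow_nonneg (by positivity) _

theorem norm_taylorSeries_le_smaleGamma_pow (hf : AnalyticAt ℝ f ζ)
    (hfin : BddAbove (Set.range fun k : ℕ => smaleTerm f ζ (k + 2))) (k : ℕ) :
    ‖taylorSeries (fun w => dfInv f ζ (f w)) ζ (k + 2)‖ ≤ smaleGamma f ζ ^ (k + 1) := by
  have hterm : smaleTerm f ζ (k + 2) ≤ smaleGamma f ζ := le_ciSup hfin k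
  rwa [smaleTerm_eq hf, show ((k + 2 : ℕ) : ℝ) - 1 = (k + 1 : ℕ) by push_cast; ring, one_div,
    Real.rpow_inv_le_iff_of_pos (norm_nonneg _) smaleGamma_nonneg (by positivity),
    Real.rpow_natCast] at hterm

theorem fderiv_dfInv_comp {z : EuclideanSpace ℝ (Fin n)} (hf : DifferentiableAt ℝ f z) :
    fderiv ℝ (fun w => dfInv f ζ (f w)) z = dfInv f ζ * fderiv ℝ f z :=
  ((dfInv f ζ).hasFDerivAt.comp z hf.hasFDerivAt).fderiv

theorem fderiv_dfInv_comp_self (hinv : IsUnit (fderiv ℝ f ζ)) (hf : DifferentiableAt ℝ f ζ) :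
    fderiv ℝ (fun w => dfInv f ζ (f w)) ζ = 1 := by
  rw [fderiv_dfInv_comp hf]
  exact Ring.inverse_mul_cancel _ hinv

theorem isUnit_fderiv_of_dfInv_comp (hinv : IsUnit (fderiv ℝ f ζ)) {z : EuclideanSpace ℝ (Fin n)}
    (hf : DifferentiableAt ℝ f z) (h : IsUnit (fderiv ℝ (fun w => dfInv f ζ (f w)) z)) :
    IsUnit (fderiv ℝ f z) := by
  rw [fderiv_dfInv_comp hf] at h
  exact hinv.ringInverse.mul_left_iff.1 h

theorem newton_dfInv_comp (hinv : IsUnit (fderiv ℝ f ζ)) {z : EuclideanSpace ℝ (Fin n)}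
    (hf : DifferentiableAt ℝ f z) : newton (fun w => dfInv f ζ (f w)) z = newton f z := by
  have hD : dfInv (fun w => dfInv f ζ (f w)) z = dfInv f z * fderiv ℝ f ζ := by
    rw [dfInv, fderiv_dfInv_comp hf, Ring.inverse_mul (a := dfInv f ζ) (Or.inl hinv.ringInverse),
      dfInv, Ring.inverse_inverse hinv]
    rfl
  rw [newton, newton, hD]
  exact congr_arg (z - dfInv f z ·) (DFunLike.congr_fun (Ring.mul_inverse_cancel _ hinv) (f z))

end Smale

/-- Lemma 4 (flat case): if `f(ζ) = 0`, `Df(ζ)` invertible and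
`ν = ‖z-ζ‖γ(f,ζ) < 1-√2/2`, then `Df(z)` is invertible and the Newton iterate
satisfies `‖N_f(z) - ζ‖ ≤ ν‖z-ζ‖/ψ(ν)`. -/
theorem newton_step_bound {n : ℕ}
    (f : EuclideanSpace ℝ (Fin n) → EuclideanSpace ℝ (Fin n))
    (hf : ∀ w, AnalyticAt ℝ f w)
    (ζ z : EuclideanSpace ℝ (Fin n))
    (hζ : f ζ = 0)
    (hinv : IsUnit (fderiv ℝ f ζ))
    (hfin : BddAbove (Set.range fun k : ℕ => smaleTerm f ζ (k + 2)))
    (hν : ‖z - ζ‖ * smaleGamma f ζ < 1 - Real.sqrt 2 / 2) :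
    IsUnit (fderiv ℝ f z) ∧
      ‖newton f z - ζ‖ ≤
        (‖z - ζ‖ * smaleGamma f ζ) * ‖z - ζ‖ /
          psi (‖z - ζ‖ * smaleGamma f ζ) := by
  set g := fun w => dfInv f ζ (f w)
  set q := taylorSeries g ζ
  set y := z - ζ
  set u := ‖y‖ * smaleGamma f ζ
  have hq : ∀ k, ‖q (k + 2)‖ ≤ smaleGamma f ζ ^ (k + 1) :=
    norm_taylorSeries_le_smaleGamma_pow (hf ζ) hfin
  have hu : u < 1 := hν.trans (by linarith [Real.sqrt_pos.2 two_pos])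
  have hy : y ∈ eball 0 q.radius := by
    simpa [edist_eq_enorm_sub, ← ofReal_norm] using q.ofReal_lt_radius hq (norm_nonneg y) hu
  have hgq : HasFPowerSeriesOnBall g q ζ q.radius :=
    hasFPowerSeriesOnBall_taylorSeries (fun w _ => ((dfInv f ζ).analyticAt _).comp (hf w))
      (pos_of_gt hy)
  have hz : ζ + y = z := add_sub_cancel ζ z
  have hg1 : fderiv ℝ g ζ = 1 := fderiv_dfInv_comp_self hinv (hf ζ).differentiableAt
  have hg0 : g ζ = 0 := by simp [g, hζ]
  have hDg : ‖fderiv ℝ g z - 1‖ ≤ 1 / (1 - u) ^ 2 - 1 := by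
    simpa only [hz, hg1] using hgq.norm_fderiv_sub_fderiv_le hq hy hu
  have hres : ‖fderiv ℝ g z y - g z‖ ≤ u / (1 - u) ^ 2 * ‖y‖ := by
    simpa only [hz, hg0, sub_zero] using hgq.norm_fderiv_apply_sub_le hq hy hu
  have hc := inv_sq_sub_one_lt_one hν
  refine ⟨isUnit_fderiv_of_dfInv_comp hinv (hf z).differentiableAt
    (isUnit_of_norm_sub_one_lt_one (hDg.trans_lt hc)), ?_⟩
  calc ‖newton f z - ζ‖ = ‖y - Ring.inverse (fderiv ℝ g z) (g z)‖ := by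
        rw [← newton_dfInv_comp hinv (hf z).differentiableAt, newton, dfInv, sub_right_comm]
    _ ≤ ‖fderiv ℝ g z y - g z‖ / (1 - (1 / (1 - u) ^ 2 - 1)) :=
        ContinuousLinearMap.norm_sub_inverse_apply_le hDg hc _ _
    _ ≤ u / (1 - u) ^ 2 * ‖y‖ / (1 - (1 / (1 - u) ^ 2 - 1)) :=
        div_le_div_of_nonneg_right hres (by linarith)
    _ = u * ‖y‖ / psi u := by
        rw [one_sub_inv_sq_sub_one hu.ne]
        field_simp [sub_ne_zero.2 hu.ne']
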